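/- arXiv:1703.10256 — 3 statements merged into one kernel-verified Lean document; each statement's English description precedes it below -/
import Mathlib

section
/- Let M_1,…,M_n be i.i.d. real random variables taking values in a compact interval [a,b], whose common law has a density (with respect to Lebesgue measure) bounded below by a constant c > 0 on [a,b]. Then for every x ∈ [a,b], the expected nearest-neighbor distance satisfies E[ min_{1≤i≤n} |M_i − x| ] ≤ 1 / ( c (n+1) ). -/
open MeasureTheory ProbabilityTheory
open scoped ENNReal NNReal

/-!
The nearest-neighbour distance exceeds `t` only if every `M i` avoids the closed ball of
radius `t` about `x`. For `t ≤ b - a` that ball meets `[a, b]` in an interval of length at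
least `t`, which carries mass at least `c t`, so by independence the tail probability is at
most `(1 - c t) ^ n`; for `t > b - a` it vanishes. The layer-cake formula then bounds the
expectation by `∫₀^{1/c} (1 - c t) ^ n dt = 1 / (c (n + 1))`.
-/

open Set Metric

theorem smul_restrict_le_withDensity {α : Type*} [MeasurableSpace α] {ν : Measure α}
    {f : α → ℝ≥0∞} {r : ℝ≥0∞} {s : Set α} (hs : MeasurableSet s) (hf : ∀ y ∈ s, r ≤ f y) :
    r • ν.restrict s ≤ ν.withDensity f :=
  calc r • ν.restrict s = (ν.restrict s).withDensity fun _ => r := (withDensity_const _).symm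
    _ ≤ (ν.restrict s).withDensity f := withDensity_mono (ae_restrict_of_forall_mem hs hf)
    _ = (ν.withDensity f).restrict s := (restrict_withDensity hs f).symm
    _ ≤ ν.withDensity f := Measure.restrict_le_self

theorem le_volume_Icc_inter_closedBall {a b x t : ℝ} (hx : x ∈ Icc a b) (ht₀ : 0 ≤ t)
    (ht : t ≤ b - a) : ENNReal.ofReal t ≤ volume (Icc a b ∩ closedBall x t) := by
  rw [Real.closedBall_eq_Icc, Icc_inter_Icc, Real.volume_Icc]
  refine ENNReal.ofReal_le_ofReal ?_
  have hlen : max a (x - t) ≤ min b (x + t) - t := by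
    rw [← min_sub_sub_right, add_sub_cancel_right]
    exact max_le (le_min (by linarith) hx.1) (le_min (by linarith [hx.2]) (by linarith))
  linarith

theorem measure_compl_closedBall_le {μ : Measure ℝ} [IsProbabilityMeasure μ] {a b c x t : ℝ}
    (hsupp : ∀ᵐ y ∂μ, y ∈ Icc a b) (hμ : ENNReal.ofReal c • volume.restrict (Icc a b) ≤ μ)
    (hc : 0 ≤ c) (hx : x ∈ Icc a b) (ht : 0 ≤ t) :
    μ (closedBall x t)ᶜ ≤ ENNReal.ofReal (1 - c * t) := by
  rcases le_or_gt t (b - a) with htba | htba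
  · have hball : ENNReal.ofReal (c * t) ≤ μ (closedBall x t) :=
      calc ENNReal.ofReal (c * t) = ENNReal.ofReal c * ENNReal.ofReal t := ENNReal.ofReal_mul hc
        _ ≤ ENNReal.ofReal c * volume (Icc a b ∩ closedBall x t) := by
          gcongr; exact le_volume_Icc_inter_closedBall hx ht htba
        _ = (ENNReal.ofReal c • volume.restrict (Icc a b)) (closedBall x t) := by
          rw [Measure.smul_apply, Measure.restrict_apply measurableSet_closedBall, inter_comm,
            smul_eq_mul]
        _ ≤ μ (closedBall x t) := hμ _
    rw [prob_compl_eq_one_sub measurableSet_closedBall, ENNReal.ofReal_sub _ (by positivity),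
      ENNReal.ofReal_one]
    exact tsub_le_tsub_left hball 1
  · have hsub : Icc a b ⊆ closedBall x t := fun y hy => by
      rw [Real.closedBall_eq_Icc]
      constructor <;> linarith [hx.1, hx.2, hy.1, hy.2]
    rw [measure_mono_null (compl_subset_compl.2 hsub) (ae_iff.1 hsupp)]
    exact zero_le

theorem measure_forall_mem_eq_pow {Ω ι β : Type*} [MeasurableSpace Ω] [MeasurableSpace β]
    [Fintype ι] {P : Measure Ω} {μ : Measure β} {X : ι → Ω → β} (hind : iIndepFun X P)
    (hX : ∀ i, Measurable (X i)) (hlaw : ∀ i, P.map (X i) = μ) {S : Set β}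
    (hS : MeasurableSet S) : P {ω | ∀ i, X i ω ∈ S} = μ S ^ Fintype.card ι := by
  have hinter : {ω | ∀ i, X i ω ∈ S} = ⋂ i, X i ⁻¹' S := by ext; simp
  rw [hinter, hind.meas_iInter fun i => ⟨S, hS, rfl⟩, ← Finset.card_univ, ← Finset.prod_const]
  exact Finset.prod_congr rfl fun i _ => by rw [← hlaw i, Measure.map_apply (hX i) hS]

theorem integral_one_sub_mul_pow {c : ℝ} (hc : c ≠ 0) (n : ℕ) :
    ∫ t in (0 : ℝ)..c⁻¹, (1 - c * t) ^ n = 1 / (c * (n + 1)) := by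
  rw [intervalIntegral.integral_comp_sub_mul (fun y => y ^ n) hc, integral_pow]
  simp only [mul_zero, sub_zero, one_pow, mul_inv_cancel₀ hc, sub_self,
    zero_pow (Nat.succ_ne_zero n), smul_eq_mul]
  field_simp

theorem setLIntegral_Ioi_ofReal_one_sub_mul_pow {c : ℝ} (hc : 0 < c) {n : ℕ} (hn : n ≠ 0) :
    ∫⁻ t in Ioi 0, ENNReal.ofReal (1 - c * t) ^ n = ENNReal.ofReal (1 / (c * (n + 1))) := by
  have hzero : ∀ t ∈ Ioi c⁻¹, ENNReal.ofReal (1 - c * t) ^ n = 0 := fun t ht => by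
    have : 1 < c * t := by simpa [hc.ne'] using mul_lt_mul_of_pos_left ht hc
    rw [ENNReal.ofReal_eq_zero.2 (by linarith), zero_pow hn]
  have hnonneg : ∀ t ∈ Ioc 0 c⁻¹, 0 ≤ 1 - c * t := fun t ht => by
    have : c * t ≤ 1 := by simpa [hc.ne'] using mul_le_mul_of_nonneg_left ht.2 hc.le
    linarith
  have hpow : ∀ t ∈ Ioc 0 c⁻¹, ENNReal.ofReal (1 - c * t) ^ n = ENNReal.ofReal ((1 - c * t) ^ n) :=
    fun t ht => by rw [ENNReal.ofReal_pow (hnonneg t ht)]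
  rw [← Ioc_union_Ioi_eq_Ioi (inv_nonneg.2 hc.le), lintegral_union measurableSet_Ioi
    (Ioc_disjoint_Ioi le_rfl), setLIntegral_congr_fun measurableSet_Ioi hzero, lintegral_zero,
    add_zero, setLIntegral_congr_fun measurableSet_Ioc hpow, ← ofReal_integral_eq_lintegral_ofReal,
    ← intervalIntegral.integral_of_le (inv_nonneg.2 hc.le), integral_one_sub_mul_pow hc.ne']
  · exact (by fun_prop : Continuous fun t : ℝ => (1 - c * t) ^ n).integrableOn_Ioc
  · exact ae_restrict_of_forall_mem measurableSet_Ioc fun t ht => pow_nonneg (hnonneg t ht) n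

theorem nearest_neighbor_distance_expectation_bound_general
    {Ω : Type*} [MeasurableSpace Ω] (P : Measure Ω) [IsProbabilityMeasure P]
    (n : ℕ) (hn : 0 < n)
    (M : Fin n → Ω → ℝ) (hMmeas : ∀ i, Measurable (M i))
    (a b : ℝ)
    -- common law: density f with respect to Lebesgue measure
    (f : ℝ → ℝ≥0∞)
    (hlaw : ∀ i, Measure.map (M i) P = MeasureTheory.volume.withDensity f)
    -- independence
    (hindep : iIndepFun M P)
    -- the variables take values in [a,b]
    (hsupp : ∀ i, ∀ᵐ ω ∂P, M i ω ∈ Set.Icc a b)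
    -- the density is bounded below by c > 0 on [a,b]
    (c : ℝ) (hc : 0 < c)
    (hfc : ∀ t ∈ Set.Icc a b, ENNReal.ofReal c ≤ f t)
    (x : ℝ) (hx : x ∈ Set.Icc a b) :
    ∫ ω, Finset.univ.inf' (Finset.univ_nonempty_iff.mpr ⟨⟨0, hn⟩⟩)
        (fun i => |M i ω - x|) ∂P
      ≤ 1 / (c * (n + 1)) := by
  set μ := volume.withDensity f
  have : IsProbabilityMeasure μ :=
    hlaw ⟨0, hn⟩ ▸ Measure.isProbabilityMeasure_map (hMmeas _).aemeasurable
  have hμsupp : ∀ᵐ y ∂μ, y ∈ Icc a b :=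
    hlaw ⟨0, hn⟩ ▸ (ae_map_iff (hMmeas _).aemeasurable measurableSet_Icc).2 (hsupp _)
  have hμ : ENNReal.ofReal c • volume.restrict (Icc a b) ≤ μ :=
    smul_restrict_le_withDensity measurableSet_Icc hfc
  set Y := fun ω => Finset.univ.inf' (Finset.univ_nonempty_iff.mpr ⟨⟨0, hn⟩⟩)
    (fun i => |M i ω - x|)
  have hYmeas : Measurable Y := by fun_prop
  have hY0 : 0 ≤ Y := fun ω => Finset.le_inf' _ _ fun i _ => abs_nonneg _
  have htail : ∀ t ∈ Ioi (0 : ℝ), P {ω | t < Y ω} ≤ ENNReal.ofReal (1 - c * t) ^ n :=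
    fun t ht => calc
      P {ω | t < Y ω} = P {ω | ∀ i, M i ω ∈ (closedBall x t)ᶜ} := by
        congr; ext ω; simp [Y, Finset.lt_inf'_iff, Real.dist_eq]
      _ = μ (closedBall x t)ᶜ ^ n := by
        simpa using measure_forall_mem_eq_pow hindep hMmeas hlaw measurableSet_closedBall.compl
      _ ≤ _ := by gcongr; exact measure_compl_closedBall_le hμsupp hμ hc.le hx ht.le
  rw [integral_eq_lintegral_of_nonneg_ae (ae_of_all _ hY0) hYmeas.aestronglyMeasurable]
  refine ENNReal.toReal_le_of_le_ofReal (by positivity) ?_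
  calc ∫⁻ ω, ENNReal.ofReal (Y ω) ∂P = ∫⁻ t in Ioi 0, P {ω | t < Y ω} :=
        lintegral_eq_lintegral_meas_lt P (ae_of_all _ hY0) hYmeas.aemeasurable
    _ ≤ ∫⁻ t in Ioi 0, ENNReal.ofReal (1 - c * t) ^ n := setLIntegral_mono' measurableSet_Ioi htail
    _ = _ := setLIntegral_Ioi_ofReal_one_sub_mul_pow hc hn.ne'

theorem nearest_neighbor_distance_expectation_bound
    {Ω : Type*} [MeasurableSpace Ω] (P : Measure Ω) [IsProbabilityMeasure P]
    (n : ℕ) (hn : 0 < n)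
    (M : Fin n → Ω → ℝ) (hMmeas : ∀ i, Measurable (M i))
    (a b : ℝ) (hab : a ≤ b)
    -- common law: density f with respect to Lebesgue measure
    (f : ℝ → ℝ≥0∞) (hf : Measurable f)
    (hlaw : ∀ i, Measure.map (M i) P = MeasureTheory.volume.withDensity f)
    -- independence
    (hindep : iIndepFun M P)
    -- the variables take values in [a,b]
    (hsupp : ∀ i, ∀ᵐ ω ∂P, M i ω ∈ Set.Icc a b)
    -- the density is bounded below by c > 0 on [a,b]
    (c : ℝ) (hc : 0 < c)
    (hfc : ∀ t ∈ Set.Icc a b, ENNReal.ofReal c ≤ f t)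
    (x : ℝ) (hx : x ∈ Set.Icc a b) :
    ∫ ω, Finset.univ.inf' (Finset.univ_nonempty_iff.mpr ⟨⟨0, hn⟩⟩)
        (fun i => |M i ω - x|) ∂P
      ≤ 1 / (c * (n + 1)) :=
  nearest_neighbor_distance_expectation_bound_general P n hn M hMmeas a b f hlaw hindep hsupp c hc
    hfc x hx
end

section
/- Consider the finite-population matching setup with nearest-neighbor matching on real values: the units of A_M carry fixed values m_j ∈ [a,b], the respondents i ∈ A_R carry values M_i that are i.i.d. random variables supported in [a,b] with density bounded below by c > 0 on [a,b], and each j ∈ A_M is matched to a donor j(1) ∈ A_R minimizing |M_i − m_j|. Suppose π_i ≥ C_1 n / N for all i ∈ A for constants C_1 > 0 and n > 0. Then the matching-discrepancy term B_N = (n^{1/2}/N) Σ_{j∈A_M} π_j^{-1} ( M_{j(1)} − m_j ) satisfies E|B_N| ≤ |A_M| / ( C_1 c n^{1/2} ( n_R + 1 ) ), where n_R = |A_R|. -/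
open MeasureTheory ProbabilityTheory
open scoped ENNReal NNReal

/-!
Fix a nonrespondent `j` and write `D = |M_{j(1)} - m_j| = min_{i ∈ A_R} |M_i - m_j|`. For
`0 ≤ t ≤ b - a` the window `(m_j - t, m_j + t)` meets `[a, b]` in an interval of length at least
`t`, which carries mass at least `c t`; by independence `P(D ≥ t) ≤ (1 - c t)^{n_R}`. The layer-cake
formula then gives `E D ≤ ∫₀^{b-a} (1 - c t)^{n_R} dt ≤ 1 / (c (n_R + 1))`. Finally
`π_j⁻¹ ≤ N / (C₁ n)` and the triangle inequality sum these bounds over `A_M`.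
-/

open Set

section Density

variable {f : ℝ → ℝ≥0∞} {a b c : ℝ}

lemma ofReal_mul_sub_le_withDensity_Ioo (hc : 0 ≤ c)
    (hfc : ∀ t ∈ Icc a b, ENNReal.ofReal c ≤ f t) {u v : ℝ} (hu : a ≤ u) (hv : v ≤ b) :
    ENNReal.ofReal (c * (v - u)) ≤ volume.withDensity f (Ioo u v) := by
  rw [withDensity_apply _ measurableSet_Ioo, ENNReal.ofReal_mul hc, ← Real.volume_Ioo,
    ← setLIntegral_const]
  exact setLIntegral_mono' measurableSet_Ioo fun x hx =>
    hfc x ⟨hu.trans hx.1.le, hx.2.le.trans hv⟩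

lemma ofReal_mul_le_withDensity_Ioo_sub_add (hc : 0 ≤ c)
    (hfc : ∀ t ∈ Icc a b, ENNReal.ofReal c ≤ f t) {m₀ t : ℝ} (hm₀ : m₀ ∈ Icc a b)
    (ht : 0 ≤ t) (htb : t ≤ b - a) :
    ENNReal.ofReal (c * t) ≤ volume.withDensity f (Ioo (m₀ - t) (m₀ + t)) := by
  -- `[u, u + t]` is a subinterval of `[a, b] ∩ [m₀ - t, m₀ + t]`
  set u := max a (min (m₀ - t) (b - t))
  have hu : a ≤ u := le_max_left _ _
  have hub : u ≤ b - t := max_le (by linarith) (min_le_right _ _)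
  have hum : u ≤ m₀ := max_le hm₀.1 ((min_le_left _ _).trans (by linarith))
  have hmu : m₀ - t ≤ u := (le_min le_rfl (by linarith [hm₀.2])).trans (le_max_right _ _)
  have hsub : Ioo u (u + t) ⊆ Ioo (m₀ - t) (m₀ + t) :=
    Ioo_subset_Ioo hmu (by linarith)
  calc ENNReal.ofReal (c * t) = ENNReal.ofReal (c * (u + t - u)) := by rw [add_sub_cancel_left]
    _ ≤ _ := ofReal_mul_sub_le_withDensity_Ioo hc hfc hu (by linarith)
    _ ≤ _ := measure_mono hsub

lemma withDensity_setOf_le_abs_sub_le [IsProbabilityMeasure (volume.withDensity f)]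
    (hc : 0 ≤ c) (hfc : ∀ t ∈ Icc a b, ENNReal.ofReal c ≤ f t) {m₀ t : ℝ}
    (hm₀ : m₀ ∈ Icc a b) (ht : 0 ≤ t) (htb : t ≤ b - a) :
    volume.withDensity f {x | t ≤ |x - m₀|} ≤ ENNReal.ofReal (1 - c * t) := by
  have hcompl : {x | t ≤ |x - m₀|}ᶜ = Ioo (m₀ - t) (m₀ + t) := by
    ext x
    simp only [mem_compl_iff, mem_ofPred_eq, not_le, mem_Ioo, abs_sub_lt_iff]
    constructor <;> rintro ⟨h₁, h₂⟩ <;> constructor <;> linarith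
  have hmeas : MeasurableSet {x : ℝ | t ≤ |x - m₀|} :=
    measurableSet_le measurable_const (measurable_id.sub_const m₀).abs
  have hone_sub := prob_compl_eq_one_sub (μ := volume.withDensity f) hmeas.compl
  rw [compl_compl, hcompl] at hone_sub
  rw [hone_sub, ENNReal.ofReal_sub _ (mul_nonneg hc ht), ENNReal.ofReal_one]
  exact tsub_le_tsub_left (ofReal_mul_le_withDensity_Ioo_sub_add hc hfc hm₀ ht htb) 1

lemma mul_sub_le_one_of_ofReal_le_density [IsProbabilityMeasure (volume.withDensity f)]
    (hc : 0 ≤ c) (hfc : ∀ t ∈ Icc a b, ENNReal.ofReal c ≤ f t) : c * (b - a) ≤ 1 :=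
  ENNReal.ofReal_le_one.mp <|
    (ofReal_mul_sub_le_withDensity_Ioo hc hfc le_rfl le_rfl).trans prob_le_one

end Density

lemma ProbabilityTheory.iIndepFun.measure_iInter_preimage_eq_pow {Ω ι β : Type*}
    [MeasurableSpace Ω] [MeasurableSpace β] [Fintype ι] {P : Measure Ω} {X : ι → Ω → β}
    (hindep : iIndepFun X P) (hX : ∀ i, Measurable (X i)) {ν : Measure β}
    (hlaw : ∀ i, P.map (X i) = ν) {B : Set β} (hB : MeasurableSet B) :
    P (⋂ i, X i ⁻¹' B) = ν B ^ Fintype.card ι := by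
  rw [hindep.meas_iInter fun i => ⟨B, hB, rfl⟩, ← Finset.card_univ, ← Finset.prod_const]
  exact Finset.prod_congr rfl fun i _ => by rw [← hlaw i, Measure.map_apply (hX i) hB]

lemma integral_one_sub_mul_pow_le {c L : ℝ} (hc : 0 < c) (hcL : c * L ≤ 1) (k : ℕ) :
    ∫ t in (0)..L, (1 - c * t) ^ k ≤ 1 / (c * (k + 1)) := by
  rw [intervalIntegral.integral_comp_sub_mul (fun x => x ^ k) hc.ne', integral_pow,
    mul_zero, sub_zero, one_pow, smul_eq_mul, inv_mul_eq_div, div_div, mul_comm ((k : ℝ) + 1) c]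
  have : 0 ≤ (1 - c * L) ^ (k + 1) := pow_nonneg (by linarith) _
  gcongr
  linarith

section NearestNeighbor

variable {Ω ι : Type*} [MeasurableSpace Ω] {P : Measure Ω} [Fintype ι] {X : ι → Ω → ℝ}
  {f : ℝ → ℝ≥0∞} {a b c m₀ : ℝ} {D : Ω → ℝ}

lemma measureReal_setOf_le_le_pow_of_le_abs_sub [IsProbabilityMeasure (volume.withDensity f)]
    (hindep : iIndepFun X P) (hX : ∀ i, Measurable (X i))
    (hlaw : ∀ i, P.map (X i) = volume.withDensity f) (hc : 0 ≤ c)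
    (hfc : ∀ t ∈ Icc a b, ENNReal.ofReal c ≤ f t) (hm₀ : m₀ ∈ Icc a b)
    (hDle : ∀ ω i, D ω ≤ |X i ω - m₀|) {t : ℝ} (ht : 0 ≤ t) (htb : t ≤ b - a) :
    P.real {ω | t ≤ D ω} ≤ (1 - c * t) ^ Fintype.card ι := by
  have hct : 0 ≤ 1 - c * t := by
    nlinarith [mul_sub_le_one_of_ofReal_le_density hc hfc, mul_le_mul_of_nonneg_left htb hc]
  have hmeas : MeasurableSet {x : ℝ | t ≤ |x - m₀|} :=
    measurableSet_le measurable_const (measurable_id.sub_const m₀).abs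
  refine ENNReal.toReal_le_of_le_ofReal (by positivity) ?_
  calc P {ω | t ≤ D ω} ≤ P (⋂ i, X i ⁻¹' {x | t ≤ |x - m₀|}) :=
        measure_mono fun ω hω => mem_iInter.2 fun i => le_trans hω (hDle ω i)
    _ = volume.withDensity f {x | t ≤ |x - m₀|} ^ Fintype.card ι :=
        hindep.measure_iInter_preimage_eq_pow hX hlaw hmeas
    _ ≤ ENNReal.ofReal (1 - c * t) ^ Fintype.card ι :=
        pow_le_pow_left' (withDensity_setOf_le_abs_sub_le hc hfc hm₀ ht htb) _
    _ = ENNReal.ofReal ((1 - c * t) ^ Fintype.card ι) := (ENNReal.ofReal_pow hct _).symm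

lemma ae_le_sub_of_le_abs_sub {Y : Ω → ℝ} (hY : ∀ᵐ ω ∂P, Y ω ∈ Icc a b)
    (hm₀ : m₀ ∈ Icc a b) (hDle : ∀ ω, D ω ≤ |Y ω - m₀|) : ∀ᵐ ω ∂P, D ω ≤ b - a := by
  filter_upwards [hY] with ω hω
  exact (hDle ω).trans (abs_sub_le_iff.2 ⟨by linarith [hω.2, hm₀.1], by linarith [hω.1, hm₀.2]⟩)

theorem integral_le_one_div_of_le_abs_sub_iid [IsProbabilityMeasure P] [Nonempty ι]
    (hindep : iIndepFun X P) (hX : ∀ i, Measurable (X i))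
    (hlaw : ∀ i, P.map (X i) = volume.withDensity f) (hsupp : ∀ i, ∀ᵐ ω ∂P, X i ω ∈ Icc a b)
    (hc : 0 < c) (hfc : ∀ t ∈ Icc a b, ENNReal.ofReal c ≤ f t) (hm₀ : m₀ ∈ Icc a b)
    (hD : Measurable D) (hD0 : 0 ≤ D) (hDle : ∀ ω i, D ω ≤ |X i ω - m₀|) :
    ∫ ω, D ω ∂P ≤ 1 / (c * (Fintype.card ι + 1)) := by
  obtain ⟨i₀⟩ := ‹Nonempty ι›
  have : IsProbabilityMeasure (volume.withDensity f) :=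
    hlaw i₀ ▸ Measure.isProbabilityMeasure_map (hX i₀).aemeasurable
  have hDb := ae_le_sub_of_le_abs_sub (hsupp i₀) hm₀ (hDle · i₀)
  have hDint : Integrable D P := Integrable.of_bound hD.aestronglyMeasurable (b - a) <| by
    filter_upwards [hDb] with ω hω
    rwa [Real.norm_of_nonneg (hD0 ω)]
  have htail_anti : Antitone fun t => P.real {ω | t ≤ D ω} :=
    fun s t hst => measureReal_mono fun ω hω => hst.trans hω
  rw [hDint.integral_eq_integral_Ioc_meas_le (ae_of_all _ hD0) hDb,
    ← intervalIntegral.integral_of_le (by linarith [hm₀.1, hm₀.2])]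
  have hpow_cont : Continuous fun t : ℝ => (1 - c * t) ^ Fintype.card ι := by fun_prop
  refine (intervalIntegral.integral_mono_on (by linarith [hm₀.1, hm₀.2])
    htail_anti.intervalIntegrable (hpow_cont.intervalIntegrable _ _) fun t ht => ?_).trans
    (integral_one_sub_mul_pow_le hc (mul_sub_le_one_of_ofReal_le_density hc.le hfc) _)
  exact measureReal_setOf_le_le_pow_of_le_abs_sub hindep hX hlaw hc.le hfc hm₀ hDle ht.1 ht.2

end NearestNeighbor

lemma integral_abs_mul_sum_le {Ω ι : Type*} [MeasurableSpace Ω] {μ : Measure Ω}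
    {s : Finset ι} {Y : ι → Ω → ℝ} {w : ι → ℝ} {α W E : ℝ} (hα : 0 ≤ α)
    (hY : ∀ j ∈ s, Integrable (fun ω => |Y j ω|) μ) (hw : ∀ j ∈ s, 0 ≤ w j ∧ w j ≤ W)
    (hE : ∀ j ∈ s, ∫ ω, |Y j ω| ∂μ ≤ E) :
    ∫ ω, |α * ∑ j ∈ s, w j * Y j ω| ∂μ ≤ α * (s.card * (W * E)) := by
  have hpointwise : ∀ ω, |α * ∑ j ∈ s, w j * Y j ω| ≤ α * ∑ j ∈ s, w j * |Y j ω| := by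
    intro ω
    rw [abs_mul, abs_of_nonneg hα]
    gcongr
    refine (Finset.abs_sum_le_sum_abs _ _).trans_eq (Finset.sum_congr rfl fun j hj => ?_)
    rw [abs_mul, abs_of_nonneg (hw j hj).1]
  have hsum_int : ∀ j ∈ s, Integrable (fun ω => w j * |Y j ω|) μ :=
    fun j hj => (hY j hj).const_mul _
  calc ∫ ω, |α * ∑ j ∈ s, w j * Y j ω| ∂μ ≤ ∫ ω, α * ∑ j ∈ s, w j * |Y j ω| ∂μ :=
        integral_mono_of_nonneg (ae_of_all _ fun _ => abs_nonneg _)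
          ((integrable_finsetSum s hsum_int).const_mul α) (ae_of_all _ hpointwise)
    _ = α * ∑ j ∈ s, w j * ∫ ω, |Y j ω| ∂μ := by
        simp only [integral_const_mul, integral_finsetSum s hsum_int]
    _ ≤ α * ∑ _j ∈ s, W * E :=
        mul_le_mul_of_nonneg_left (Finset.sum_le_sum fun j hj => mul_le_mul (hw j hj).2
          (hE j hj) (integral_nonneg fun _ => abs_nonneg _) ((hw j hj).1.trans (hw j hj).2)) hα
    _ = α * (s.card * (W * E)) := by rw [Finset.sum_const, nsmul_eq_mul]

theorem matching_discrepancy_expectation_bound_general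
    {Ω : Type*} [MeasurableSpace Ω] (P : Measure Ω) [IsProbabilityMeasure P]
    (N : ℕ) (AR AM : Finset (Fin N)) (hAR : AR.Nonempty)
    (π : Fin N → ℝ)
    (a b : ℝ)
    -- fixed values of the nonrespondents, lying in [a,b]
    (m : Fin N → ℝ) (hm : ∀ j ∈ AM, m j ∈ Set.Icc a b)
    -- respondent values
    (M : Fin N → Ω → ℝ) (hMmeas : ∀ i, Measurable (M i))
    -- common law on the respondents: density f with respect to Lebesgue measure
    (f : ℝ → ℝ≥0∞)
    (hlaw : ∀ i ∈ AR, Measure.map (M i) P = MeasureTheory.volume.withDensity f)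
    -- independence across respondents
    (hindep : iIndepFun (fun i : AR => M i.1) P)
    -- respondent values lie in [a,b]
    (hsupp : ∀ i ∈ AR, ∀ᵐ ω ∂P, M i ω ∈ Set.Icc a b)
    -- density bounded below by c > 0 on [a,b]
    (c : ℝ) (hc : 0 < c)
    (hfc : ∀ t ∈ Set.Icc a b, ENNReal.ofReal c ≤ f t)
    -- nearest-neighbor matching: j(1) ∈ A_R attains min_{i∈A_R} |M_i − m_j|
    (donor : Ω → Fin N → Fin N)
    (hdonor_min : ∀ ω, ∀ j ∈ AM, ∀ i ∈ AR, |M (donor ω j) ω - m j| ≤ |M i ω - m j|)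
    (hdonor_meas : ∀ j ∈ AM, Measurable fun ω => M (donor ω j) ω)
    -- lower bound on the inclusion probabilities on the sample A = A_R ∪ A_M
    (C₁ n : ℝ) (hC₁ : 0 < C₁) (hn : 0 < n)
    (hπlow : ∀ i ∈ AR ∪ AM, C₁ * n / N ≤ π i) :
    ∫ ω, |(Real.sqrt n / N) * ∑ j ∈ AM, (π j)⁻¹ * (M (donor ω j) ω - m j)| ∂P
      ≤ AM.card / (C₁ * c * Real.sqrt n * (AR.card + 1)) := by
  obtain ⟨i₀, hi₀⟩ := hAR
  have : Nonempty AR := ⟨⟨i₀, hi₀⟩⟩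
  have hN : (0 : ℝ) < N := Nat.cast_pos.2 i₀.pos
  have hdist_meas : ∀ j ∈ AM, Measurable fun ω => |M (donor ω j) ω - m j| :=
    fun j hj => ((hdonor_meas j hj).sub_const _).abs
  have hint : ∀ j ∈ AM, Integrable (fun ω => |M (donor ω j) ω - m j|) P := fun j hj =>
    Integrable.of_bound (hdist_meas j hj).aestronglyMeasurable (b - a) <| by
      simpa only [Real.norm_eq_abs, abs_abs] using
        ae_le_sub_of_le_abs_sub (hsupp i₀ hi₀) (hm j hj) fun ω => hdonor_min ω j hj i₀ hi₀
  have hexp : ∀ j ∈ AM, ∫ ω, |M (donor ω j) ω - m j| ∂P ≤ 1 / (c * (AR.card + 1)) :=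
    fun j hj => by
      simpa using integral_le_one_div_of_le_abs_sub_iid (ι := AR) hindep (fun i => hMmeas i)
        (fun i => hlaw i i.2) (fun i => hsupp i i.2) hc hfc (hm j hj) (hdist_meas j hj)
        (fun _ => abs_nonneg _) fun ω i => hdonor_min ω j hj i i.2
  have hweight : ∀ j ∈ AM, 0 ≤ (π j)⁻¹ ∧ (π j)⁻¹ ≤ N / (C₁ * n) := fun j hj => by
    have hπj := hπlow j (Finset.mem_union_right _ hj)
    have hlow : 0 < C₁ * n / N := by positivity
    exact ⟨inv_nonneg.2 (hlow.trans_le hπj).le, by simpa [inv_div] using inv_anti₀ hlow hπj⟩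
  refine (integral_abs_mul_sum_le (by positivity) hint hweight hexp).trans_eq ?_
  field_simp
  rw [Real.sq_sqrt hn.le, mul_comm]

theorem matching_discrepancy_expectation_bound
    {Ω : Type*} [MeasurableSpace Ω] (P : Measure Ω) [IsProbabilityMeasure P]
    (N : ℕ) (AR AM : Finset (Fin N)) (hAR : AR.Nonempty) (hdisj : Disjoint AR AM)
    -- inclusion probabilities lie in (0,1]
    (π : Fin N → ℝ) (hπ : ∀ i, 0 < π i ∧ π i ≤ 1)
    (a b : ℝ) (hab : a ≤ b)
    -- fixed values of the nonrespondents, lying in [a,b]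
    (m : Fin N → ℝ) (hm : ∀ j ∈ AM, m j ∈ Set.Icc a b)
    -- respondent values
    (M : Fin N → Ω → ℝ) (hMmeas : ∀ i, Measurable (M i))
    -- common law on the respondents: density f with respect to Lebesgue measure
    (f : ℝ → ℝ≥0∞) (hf : Measurable f)
    (hlaw : ∀ i ∈ AR, Measure.map (M i) P = MeasureTheory.volume.withDensity f)
    -- independence across respondents
    (hindep : iIndepFun (fun i : AR => M i.1) P)
    -- respondent values lie in [a,b]
    (hsupp : ∀ i ∈ AR, ∀ᵐ ω ∂P, M i ω ∈ Set.Icc a b)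
    -- density bounded below by c > 0 on [a,b]
    (c : ℝ) (hc : 0 < c)
    (hfc : ∀ t ∈ Set.Icc a b, ENNReal.ofReal c ≤ f t)
    -- nearest-neighbor matching: j(1) ∈ A_R attains min_{i∈A_R} |M_i − m_j|
    (donor : Ω → Fin N → Fin N)
    (hdonor_mem : ∀ ω, ∀ j ∈ AM, donor ω j ∈ AR)
    (hdonor_min : ∀ ω, ∀ j ∈ AM, ∀ i ∈ AR, |M (donor ω j) ω - m j| ≤ |M i ω - m j|)
    (hdonor_meas : ∀ j ∈ AM, Measurable fun ω => M (donor ω j) ω)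
    -- lower bound on the inclusion probabilities on the sample A = A_R ∪ A_M
    (C₁ n : ℝ) (hC₁ : 0 < C₁) (hn : 0 < n)
    (hπlow : ∀ i ∈ AR ∪ AM, C₁ * n / N ≤ π i) :
    ∫ ω, |(Real.sqrt n / N) * ∑ j ∈ AM, (π j)⁻¹ * (M (donor ω j) ω - m j)| ∂P
      ≤ AM.card / (C₁ * c * Real.sqrt n * (AR.card + 1)) :=
  matching_discrepancy_expectation_bound_general P N AR AM hAR π a b m hm M hMmeas f hlaw hindep
    hsupp c hc hfc donor hdonor_min hdonor_meas C₁ n hC₁ hn hπlow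
end

section
/- On a probability space carrying random variables x_1,…,x_N (values in ℝ^d), δ_1,…,δ_N ∈ {0,1}, y_1,…,y_N ∈ ℝ, I_1,…,I_N ∈ {0,1}, and constants π_1,…,π_N ∈ (0,1], define the filtration F_{N,k} = σ( x_1,…,x_N, δ_1,…,δ_N, y_1,…,y_k, I_1,…,I_k ) for 0 ≤ k ≤ N. Let m_k, κ_k be real F_{N,0}-measurable random variables and g_k an ℝ^q-valued F_{N,0}-measurable random variable, let c_1 ∈ ℝ, c_2 ∈ ℝ^q, n > 0, and set ξ_{N,k} = (n^{1/2}/N)( I_k/π_k − 1 )[ c_1 m_k + ( c_1 (1 + κ_k) + c_2ᵀ g_k ) δ_k ( y_k − m_k ) ]. If each ξ_{N,k} is integrable and for each k, E[ I_k | F_{N,k−1} ∨ σ(y_k) ] = π_k almost surely, then the partial-sum process ( Σ_{k=1}^{i} ξ_{N,k} )_{i=0,…,N} is a martingale with respect to the filtration ( F_{N,i} )_{i=0,…,N}. -/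
open MeasureTheory ProbabilityTheory Finset

/-!
Write `ξ_{N,k} = A_k (I_k/π_k - 1)`, where `A_k` is `F_{N,k-1} ∨ σ(y_k)`-measurable. The hypothesis
on `I_k` says `E[I_k/π_k - 1 | F_{N,k-1} ∨ σ(y_k)] = 0`, so pulling `A_k` out and using the tower
property gives `E[ξ_{N,k} | F_{N,k-1}] = 0`, while `ξ_{N,k}` is `F_{N,k}`-measurable: the partial sums
have martingale increments.
-/

section CondExp

variable {Ω : Type*} {m m' m0 : MeasurableSpace Ω} {μ : Measure Ω} [IsFiniteMeasure μ]

theorem condExp_div_sub_one_ae_eq_zero (hm : m ≤ m0) {f : Ω → ℝ} {c : ℝ} (hc : c ≠ 0)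
    (hf : Integrable f μ) (hfc : μ[f | m] =ᵐ[μ] fun _ => c) :
    μ[fun ω => f ω / c - 1 | m] =ᵐ[μ] 0 := by
  have hdiv : (fun ω => f ω / c - 1) = c⁻¹ • f - fun _ => 1 := by
    ext ω; simp [div_eq_inv_mul]
  rw [hdiv]
  filter_upwards [condExp_sub (hf.smul c⁻¹) (integrable_const 1) m, condExp_smul c⁻¹ f m, hfc]
    with ω hsub hsmul hω
  simp [hsub, hsmul, hω, condExp_const hm, hc]

theorem condExp_mul_ae_eq_zero_of_le (hmm' : m ≤ m') (hm' : m' ≤ m0) {A h : Ω → ℝ}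
    (hA : StronglyMeasurable[m'] A) (hAh : Integrable (A * h) μ) (hh : Integrable h μ)
    (hcond : μ[h | m'] =ᵐ[μ] 0) : μ[A * h | m] =ᵐ[μ] 0 :=
  calc μ[A * h | m] =ᵐ[μ] μ[μ[A * h | m'] | m] := (condExp_condExp_of_le hmm' hm').symm
    _ =ᵐ[μ] μ[0 | m] := condExp_congr_ae <|
        (condExp_mul_of_stronglyMeasurable_left hA hAh hh).trans <| by
          filter_upwards [hcond] with ω hω
          simp [hω]
    _ = 0 := condExp_zero

theorem martingale_sum_filter_lt {N : ℕ} {𝓕 : Filtration ℕ m0} {ξ : Fin N → Ω → ℝ}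
    (hmeas : ∀ k : Fin N, StronglyMeasurable[𝓕 (k + 1)] (ξ k)) (hint : ∀ k, Integrable (ξ k) μ)
    (hcond : ∀ k : Fin N, μ[ξ k | 𝓕 k] =ᵐ[μ] 0) :
    Martingale (fun i => ∑ k ∈ univ.filter (fun k : Fin N => (k : ℕ) < i), ξ k) 𝓕 μ := by
  refine martingale_of_condExp_sub_eq_zero_nat (fun i => ?_)
    (fun i => integrable_finsetSum' _ fun k _ => hint k) (fun i => ?_)
  · exact Finset.stronglyMeasurable_sum _ fun k hk =>
      (hmeas k).mono (𝓕.mono (mem_filter.1 hk).2)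
  · have hsplit : univ.filter (fun k : Fin N => (k : ℕ) < i + 1) =
        univ.filter (fun k : Fin N => (k : ℕ) < i) ∪ univ.filter (fun k : Fin N => (k : ℕ) = i) := by
      ext k
      simp only [mem_filter, mem_union, mem_univ, true_and]
      omega
    rw [hsplit, sum_union (disjoint_filter.2 fun k _ h => h.ne), add_sub_cancel_left]
    refine (condExp_finsetSum (fun k _ => hint k) _).trans
      ((eventuallyEq_sum (g := fun _ => 0) fun k hk => ?_).trans (by simp))
    rw [← (mem_filter.1 hk).2]
    exact hcond k

theorem martingale_sum_filter_lt_mul_div_sub_one {N : ℕ} {𝓕 : Filtration ℕ m0}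
    {G : Fin N → MeasurableSpace Ω} (h𝓕G : ∀ k : Fin N, 𝓕 k ≤ G k)
    (hG𝓕 : ∀ k : Fin N, G k ≤ 𝓕 (k + 1)) {A f : Fin N → Ω → ℝ} {c : Fin N → ℝ}
    (hc : ∀ k, c k ≠ 0) (hA : ∀ k, Measurable[G k] (A k))
    (hf : ∀ k : Fin N, Measurable[𝓕 (k + 1)] (f k)) (hf_int : ∀ k, Integrable (f k) μ)
    (hAf_int : ∀ k, Integrable (A k * fun ω => f k ω / c k - 1) μ)
    (hfc : ∀ k, μ[f k | G k] =ᵐ[μ] fun _ => c k) :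
    Martingale (fun i => ∑ k ∈ univ.filter (fun k : Fin N => (k : ℕ) < i),
      A k * fun ω => f k ω / c k - 1) 𝓕 μ := by
  have hGle (k : Fin N) : G k ≤ m0 := (hG𝓕 k).trans (𝓕.le _)
  refine martingale_sum_filter_lt (fun k => ?_) hAf_int (fun k => ?_)
  · exact (((hA k).mono (hG𝓕 k) le_rfl).mul (((hf k).div_const _).sub_const 1)).stronglyMeasurable
  · exact condExp_mul_ae_eq_zero_of_le (h𝓕G k) (hGle k) (hA k).stronglyMeasurable (hAf_int k)
      (((hf_int k).div_const _).sub (integrable_const 1))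
      (condExp_div_sub_one_ae_eq_zero (hGle k) (hc k) (hf_int k) (hfc k))

end CondExp

section SampleFiltration

variable {Ω ι α β γ : Type*} [MeasurableSpace α] [MeasurableSpace β] [MeasurableSpace γ] {N : ℕ}

abbrev sampleFiltration (x : ι → Ω → α) (δ : ι → Ω → β) (y I : Fin N → Ω → γ) (k : ℕ) :
    MeasurableSpace Ω :=
  (⨆ i, MeasurableSpace.comap (x i) inferInstance) ⊔
    (⨆ i, MeasurableSpace.comap (δ i) inferInstance) ⊔
    (⨆ i : Fin N, ⨆ _ : (i : ℕ) < k,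
      (MeasurableSpace.comap (y i) inferInstance ⊔ MeasurableSpace.comap (I i) inferInstance))

variable {x : ι → Ω → α} {δ : ι → Ω → β} {y I : Fin N → Ω → γ}

theorem sampleFiltration_mono : Monotone (sampleFiltration x δ y I) := by
  intro a b hab
  refine sup_le_sup le_rfl (iSup_mono fun i => iSup_le fun h => ?_)
  exact le_iSup_of_le (h.trans_le hab) le_rfl

theorem sampleFiltration_le [MeasurableSpace Ω] (hx : ∀ i, Measurable (x i))
    (hδ : ∀ i, Measurable (δ i)) (hy : ∀ i, Measurable (y i)) (hI : ∀ i, Measurable (I i))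
    (k : ℕ) : sampleFiltration x δ y I k ≤ ‹MeasurableSpace Ω› :=
  sup_le (sup_le (iSup_le fun i => (hx i).comap_le) (iSup_le fun i => (hδ i).comap_le))
    (iSup_le fun i => iSup_le fun _ => sup_le (hy i).comap_le (hI i).comap_le)

theorem sampleFiltration_measurable_δ (i : ι) (k : ℕ) :
    Measurable[sampleFiltration x δ y I k] (δ i) :=
  measurable_iff_comap_le.2 <| le_sup_of_le_left <| le_sup_of_le_right <| le_iSup_of_le i le_rfl

theorem sampleFiltration_measurable_y {i : Fin N} {k : ℕ} (hik : (i : ℕ) < k) :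
    Measurable[sampleFiltration x δ y I k] (y i) :=
  measurable_iff_comap_le.2 <| le_sup_of_le_right <|
    le_iSup_of_le i <| le_iSup_of_le hik le_sup_left

theorem sampleFiltration_measurable_I {i : Fin N} {k : ℕ} (hik : (i : ℕ) < k) :
    Measurable[sampleFiltration x δ y I k] (I i) :=
  measurable_iff_comap_le.2 <| le_sup_of_le_right <|
    le_iSup_of_le i <| le_iSup_of_le hik le_sup_right

end SampleFiltration

theorem pmm_partial_sum_martingale_general
    {Ω : Type*} [MeasurableSpace Ω] (P : Measure Ω) [IsProbabilityMeasure P]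
    (N d q : ℕ)
    (x : Fin N → Ω → (Fin d → ℝ)) (δ y I : Fin N → Ω → ℝ) (π : Fin N → ℝ)
    (hxmeas : ∀ i, Measurable (x i)) (hδmeas : ∀ i, Measurable (δ i))
    (hymeas : ∀ i, Measurable (y i)) (hImeas : ∀ i, Measurable (I i))
    (hI01 : ∀ i ω, I i ω = 0 ∨ I i ω = 1)
    (hπ : ∀ i, 0 < π i ∧ π i ≤ 1)
    -- the filtration F_{N,k} = σ(x_1,…,x_N, δ_1,…,δ_N, y_1,…,y_k, I_1,…,I_k)
    (F : ℕ → MeasurableSpace Ω)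
    (hF : ∀ k, F k =
      (⨆ i, MeasurableSpace.comap (x i) inferInstance) ⊔
      (⨆ i, MeasurableSpace.comap (δ i) inferInstance) ⊔
      (⨆ i : Fin N, ⨆ _ : (i : ℕ) < k,
        (MeasurableSpace.comap (y i) inferInstance ⊔
         MeasurableSpace.comap (I i) inferInstance)))
    -- F_{N,0}-measurable coefficients m_k, κ_k (real) and g_k (ℝ^q-valued)
    (m κ : Fin N → Ω → ℝ) (g : Fin N → Ω → (Fin q → ℝ))
    (hm : ∀ k, Measurable[F 0] (m k))
    (hκ : ∀ k, Measurable[F 0] (κ k))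
    (hg : ∀ k, Measurable[F 0] (g k))
    (c₁ : ℝ) (c₂ : Fin q → ℝ) (n : ℝ)
    -- the summands ξ_{N,k}
    (ξ : Fin N → Ω → ℝ)
    (hξ : ∀ k ω, ξ k ω =
      (Real.sqrt n / N) * (I k ω / π k - 1) *
        (c₁ * m k ω + (c₁ * (1 + κ k ω) + ∑ j, c₂ j * g k ω j) * δ k ω * (y k ω - m k ω)))
    -- integrability of each ξ_{N,k}
    (hint : ∀ k, Integrable (ξ k) P)
    -- E[I_k | F_{N,k−1} ∨ σ(y_k)] = π_k almost surely
    (hcond : ∀ k : Fin N,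
      P[I k | F (k : ℕ) ⊔ MeasurableSpace.comap (y k) inferInstance]
        =ᵐ[P] fun _ => π k)
    -- the partial-sum process
    (S : ℕ → Ω → ℝ)
    (hS : ∀ i ω, S i ω = ∑ k ∈ Finset.univ.filter (fun k : Fin N => (k : ℕ) < i), ξ k ω) :
    -- (S_i)_{i=0,…,N} is a martingale with respect to (F_{N,i})_{i=0,…,N}:
    -- integrable, adapted, with E[S_i | F_{N,j}] = S_j a.s. for j ≤ i ≤ N
    (∀ i ≤ N, Integrable (S i) P) ∧
    (∀ i ≤ N, Measurable[F i] (S i)) ∧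
    (∀ j i : ℕ, j ≤ i → i ≤ N → P[S i | F j] =ᵐ[P] S j) := by
  obtain rfl : F = sampleFiltration x δ y I := funext hF
  set G : Fin N → MeasurableSpace Ω := fun k =>
    sampleFiltration x δ y I k ⊔ MeasurableSpace.comap (y k) inferInstance
  have hG𝓕 (k : Fin N) : G k ≤ sampleFiltration x δ y I (k + 1) :=
    sup_le (sampleFiltration_mono k.val.le_succ)
      (measurable_iff_comap_le.1 (sampleFiltration_measurable_y k.val.lt_succ_self))
  set A : Fin N → Ω → ℝ := fun k ω => Real.sqrt n / N *
    (c₁ * m k ω + (c₁ * (1 + κ k ω) + ∑ j, c₂ j * g k ω j) * δ k ω * (y k ω - m k ω)) with hA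
  obtain rfl : ξ = fun k => A k * fun ω => I k ω / π k - 1 := funext fun k => funext fun ω => by
    simp only [hξ, hA, Pi.mul_apply]; ring
  have hA_meas (k : Fin N) : Measurable[G k] (A k) := by
    have hF0 : sampleFiltration x δ y I 0 ≤ G k :=
      le_sup_of_le_left (sampleFiltration_mono k.val.zero_le)
    have := (hm k).mono hF0 le_rfl
    have := (hκ k).mono hF0 le_rfl
    have := (hg k).mono hF0 le_rfl
    have := (sampleFiltration_measurable_δ (y := y) (I := I) k 0).mono hF0 le_rfl
    have := (comap_measurable (y k)).mono (le_sup_right : _ ≤ G k) le_rfl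
    fun_prop
  have hI_int (k : Fin N) : Integrable (I k) P := .of_mem_Icc 0 1 (hImeas k).aemeasurable <|
    ae_of_all _ fun ω => by rcases hI01 k ω with h | h <;> simp [h]
  let 𝓕 : Filtration ℕ ‹MeasurableSpace Ω› :=
    ⟨_, sampleFiltration_mono, sampleFiltration_le hxmeas hδmeas hymeas hImeas⟩
  have hmart := martingale_sum_filter_lt_mul_div_sub_one (𝓕 := 𝓕) (fun k => le_sup_left) hG𝓕
    (fun k => (hπ k).1.ne') hA_meas (fun k => sampleFiltration_measurable_I k.val.lt_succ_self)
    hI_int hint hcond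
  obtain rfl : S = _ := funext fun i => funext fun ω => (hS i ω).trans (sum_apply ω _ _).symm
  exact ⟨fun i _ => hmart.integrable i, fun i _ => (hmart.stronglyMeasurable i).measurable,
    fun j i hji _ => hmart.condExp_ae_eq hji⟩

theorem pmm_partial_sum_martingale
    {Ω : Type*} [MeasurableSpace Ω] (P : Measure Ω) [IsProbabilityMeasure P]
    (N d q : ℕ)
    (x : Fin N → Ω → (Fin d → ℝ)) (δ y I : Fin N → Ω → ℝ) (π : Fin N → ℝ)
    (hxmeas : ∀ i, Measurable (x i)) (hδmeas : ∀ i, Measurable (δ i))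
    (hymeas : ∀ i, Measurable (y i)) (hImeas : ∀ i, Measurable (I i))
    (hδ01 : ∀ i ω, δ i ω = 0 ∨ δ i ω = 1)
    (hI01 : ∀ i ω, I i ω = 0 ∨ I i ω = 1)
    (hπ : ∀ i, 0 < π i ∧ π i ≤ 1)
    -- the filtration F_{N,k} = σ(x_1,…,x_N, δ_1,…,δ_N, y_1,…,y_k, I_1,…,I_k)
    (F : ℕ → MeasurableSpace Ω)
    (hF : ∀ k, F k =
      (⨆ i, MeasurableSpace.comap (x i) inferInstance) ⊔
      (⨆ i, MeasurableSpace.comap (δ i) inferInstance) ⊔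
      (⨆ i : Fin N, ⨆ _ : (i : ℕ) < k,
        (MeasurableSpace.comap (y i) inferInstance ⊔
         MeasurableSpace.comap (I i) inferInstance)))
    -- F_{N,0}-measurable coefficients m_k, κ_k (real) and g_k (ℝ^q-valued)
    (m κ : Fin N → Ω → ℝ) (g : Fin N → Ω → (Fin q → ℝ))
    (hm : ∀ k, Measurable[F 0] (m k))
    (hκ : ∀ k, Measurable[F 0] (κ k))
    (hg : ∀ k, Measurable[F 0] (g k))
    (c₁ : ℝ) (c₂ : Fin q → ℝ) (n : ℝ) (hn : 0 < n)
    -- the summands ξ_{N,k}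
    (ξ : Fin N → Ω → ℝ)
    (hξ : ∀ k ω, ξ k ω =
      (Real.sqrt n / N) * (I k ω / π k - 1) *
        (c₁ * m k ω + (c₁ * (1 + κ k ω) + ∑ j, c₂ j * g k ω j) * δ k ω * (y k ω - m k ω)))
    -- integrability of each ξ_{N,k}
    (hint : ∀ k, Integrable (ξ k) P)
    -- E[I_k | F_{N,k−1} ∨ σ(y_k)] = π_k almost surely
    (hcond : ∀ k : Fin N,
      P[I k | F (k : ℕ) ⊔ MeasurableSpace.comap (y k) inferInstance]
        =ᵐ[P] fun _ => π k)
    -- the partial-sum process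
    (S : ℕ → Ω → ℝ)
    (hS : ∀ i ω, S i ω = ∑ k ∈ Finset.univ.filter (fun k : Fin N => (k : ℕ) < i), ξ k ω) :
    -- (S_i)_{i=0,…,N} is a martingale with respect to (F_{N,i})_{i=0,…,N}:
    -- integrable, adapted, with E[S_i | F_{N,j}] = S_j a.s. for j ≤ i ≤ N
    (∀ i ≤ N, Integrable (S i) P) ∧
    (∀ i ≤ N, Measurable[F i] (S i)) ∧
    (∀ j i : ℕ, j ≤ i → i ≤ N → P[S i | F j] =ᵐ[P] S j) :=
  pmm_partial_sum_martingale_general P N d q x δ y I π hxmeas hδmeas hymeas hImeas hI01 hπ F hF m κ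
    g hm hκ hg c₁ c₂ n ξ hξ hint hcond S hS
end
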